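/- Let Ω: TM → V be a virtual immersion with skew-symmetric second fundamental form II. Then the covariant derivative of II (with respect to the flat connection D on M × V) is tangential and satisfies (D_X II)(Y,Z) = −R(Y,Z)X, where R(X,Y)Z = ∇_Y∇_X Z − ∇_X∇_Y Z + ∇_{[X,Y]}Z. -/

import Mathlib

/-!
Because the flat derivative satisfies `D_X D_Y − D_Y D_X = D_[X,Y]`, substituting
`D_Y (Ω Z) = Ω (∇_Y Z) + II(Y, Z)` gives the Gauss–Codazzi equation directly in `V`:
`(D_X II)(Y, Z) − (D_Y II)(X, Z) = Ω (R(X, Y) Z)`. Since `II` is skew, `D_X II` is skew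
in its last two slots. A tensor with that skew-symmetry is determined by its
antisymmetrization in the first two slots, and the first Bianchi identity turns this into
`(D_X II)(Y, Z) = −Ω (R(Y, Z) X)`.
-/

open VectorField
open scoped ContDiff

noncomputable section

theorem eq_neg_of_sub_swap_eq_of_skew {α M : Type*} [AddCommGroup M] [IsAddTorsionFree M]
    {P : α → Prop} {A C : α → α → α → M}
    (hsub : ∀ x y z, P x → P y → P z → A x y z - A y x z = C x y z)
    (hskew : ∀ x y z, P x → P y → P z → A x z y = -A x y z)
    (hcyc : ∀ x y z, P x → P y → P z → C x y z + C y z x + C z x y = 0)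
    {x y z : α} (hx : P x) (hy : P y) (hz : P z) :
    A x y z = -C y z x := by
  -- go once around the six permutations of `(x, y, z)`, alternating the two symmetries
  have h2 : 2 • A x y z = 2 • -C y z x := by
    linear_combination (norm := module) hsub x y z hx hy hz - hsub y z x hy hz hx
      + hsub z x y hz hx hy + hskew x y z hx hy hz + hskew y x z hy hx hz
      - hskew z y x hz hy hx + hcyc x y z hx hy hz
  exact IsAddTorsionFree.nsmul_right_injective two_ne_zero h2

namespace VectorField

variable {𝕜 E : Type*} [NontriviallyNormedField 𝕜] [NormedAddCommGroup E] [NormedSpace 𝕜 E]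

theorem lieBracket_neg_right (V W : E → E) (x : E) :
    lieBracket 𝕜 V (-W) x = -lieBracket 𝕜 V W x := by
  simp only [lieBracket, fderiv_neg, Pi.neg_apply, neg_apply, map_neg]
  abel

theorem jacobi_identity_lieBracket {n : ℕ∞ω} (hn : minSmoothness 𝕜 2 ≤ n)
    {U V W : E → E} {x : E}
    (hU : ContDiffAt 𝕜 n U x) (hV : ContDiffAt 𝕜 n V x) (hW : ContDiffAt 𝕜 n W x) :
    lieBracket 𝕜 (lieBracket 𝕜 U V) W x + lieBracket 𝕜 (lieBracket 𝕜 V W) U x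
      + lieBracket 𝕜 (lieBracket 𝕜 W U) V x = 0 := by
  have h := leibniz_identity_lieBracket hn hW hU hV
  rw [lieBracket_swap (V := W), show lieBracket 𝕜 W V = -lieBracket 𝕜 V W from
    funext fun _ => lieBracket_swap, lieBracket_neg_right, lieBracket_swap (V := U)] at h
  linear_combination (norm := module) -h

end VectorField

variable {E V : Type*} [NormedAddCommGroup E] [NormedSpace ℝ E]
  [NormedAddCommGroup V] [NormedSpace ℝ V]

theorem minSmoothness_two_le_infty : minSmoothness ℝ 2 ≤ ∞ := by
  rw [minSmoothness_of_isRCLikeNormedField]; decide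

/-- Connections act on vector fields with no linearity assumed: additivity of `nabla` follows
from the metric property and the nondegeneracy of `g` (`IsLeviCivita.nabla_sub_right`). -/
structure IsLeviCivita (g : E → E →ₗ[ℝ] E →ₗ[ℝ] ℝ) (nabla : (E → E) → (E → E) → E → E) :
    Prop where
  nondegenerate : ∀ p (v : E), (∀ u, g p v u = 0) → v = 0
  contDiff_metric : ∀ Y Z : E → E, ContDiff ℝ ∞ Y → ContDiff ℝ ∞ Z →
    ContDiff ℝ ∞ (fun q => g q (Y q) (Z q))
  contDiff : ∀ X Y : E → E, ContDiff ℝ ∞ X → ContDiff ℝ ∞ Y → ContDiff ℝ ∞ (nabla X Y)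
  torsionFree : ∀ X Y : E → E, ContDiff ℝ ∞ X → ContDiff ℝ ∞ Y →
    ∀ p, nabla X Y p - nabla Y X p = lieBracket ℝ X Y p
  metric : ∀ X Y Z : E → E, ContDiff ℝ ∞ X → ContDiff ℝ ∞ Y → ContDiff ℝ ∞ Z → ∀ p,
    fderiv ℝ (fun q => g q (Y q) (Z q)) p (X p) = g p (nabla X Y p) (Z p) + g p (Y p) (nabla X Z p)

def curvature (nabla : (E → E) → (E → E) → E → E) (X Y Z : E → E) : E → E :=
  fun p => nabla Y (nabla X Z) p - nabla X (nabla Y Z) p + nabla (lieBracket ℝ X Y) Z p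

def secondFundForm (Ω : E → E →L[ℝ] V) (nabla : (E → E) → (E → E) → E → E) (X Y : E → E) :
    E → V :=
  fun p => fderiv ℝ (fun q => Ω q (Y q)) p (X p) - Ω p (nabla X Y p)

def covDeriv (nabla : (E → E) → (E → E) → E → E) (β : (E → E) → (E → E) → E → V)
    (X Y Z : E → E) : E → V :=
  fun p => fderiv ℝ (β Y Z) p (X p) - β (nabla X Y) Z p - β Y (nabla X Z) p

variable {g : E → E →ₗ[ℝ] E →ₗ[ℝ] ℝ} {nabla : (E → E) → (E → E) → E → E} {X Y Z : E → E}

namespace IsLeviCivita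

theorem nabla_sub_right (hL : IsLeviCivita g nabla) (hX : ContDiff ℝ ∞ X)
    (hY : ContDiff ℝ ∞ Y) (hZ : ContDiff ℝ ∞ Z) :
    nabla X (Y - Z) = nabla X Y - nabla X Z := by
  funext p
  refine sub_eq_zero.mp (hL.nondegenerate p _ fun u => ?_)
  have hu : ContDiff ℝ ∞ (fun _ : E => u) := contDiff_const
  have hsplit : (fun q => g q ((Y - Z) q) u) = fun q => g q (Y q) u - g q (Z q) u := by
    funext q; simp
  have hYZ := hL.metric X (Y - Z) _ hX (hY.sub hZ) hu p
  rw [hsplit, fderiv_fun_sub ((hL.contDiff_metric Y _ hY hu).differentiable (by simp) p)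
    ((hL.contDiff_metric Z _ hZ hu).differentiable (by simp) p)] at hYZ
  have hY' := hL.metric X Y _ hX hY hu p
  have hZ' := hL.metric X Z _ hX hZ hu p
  simp only [sub_apply, Pi.sub_apply, map_sub, LinearMap.sub_apply] at hYZ ⊢
  linarith

theorem lieBracket_eq (hL : IsLeviCivita g nabla) (hX : ContDiff ℝ ∞ X) (hY : ContDiff ℝ ∞ Y) :
    lieBracket ℝ X Y = nabla X Y - nabla Y X :=
  funext fun p => (hL.torsionFree X Y hX hY p).symm

theorem nabla_lieBracket_right (hL : IsLeviCivita g nabla) (hX : ContDiff ℝ ∞ X)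
    (hY : ContDiff ℝ ∞ Y) (hZ : ContDiff ℝ ∞ Z) :
    nabla Z (lieBracket ℝ X Y) = nabla Z (nabla X Y) - nabla Z (nabla Y X) := by
  rw [hL.lieBracket_eq hX hY,
    hL.nabla_sub_right hZ (hL.contDiff X Y hX hY) (hL.contDiff Y X hY hX)]

theorem nabla_sub_left (hL : IsLeviCivita g nabla) (hX : ContDiff ℝ ∞ X)
    (hY : ContDiff ℝ ∞ Y) (hZ : ContDiff ℝ ∞ Z) :
    nabla (X - Y) Z = nabla X Z - nabla Y Z := by
  funext p
  have hXY := hL.torsionFree (X - Y) Z (hX.sub hY) hZ p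
  have hX' := hL.torsionFree X Z hX hZ p
  have hY' := hL.torsionFree Y Z hY hZ p
  have hZ' := congrFun (hL.nabla_sub_right hZ hX hY) p
  have hbr : lieBracket ℝ (X - Y) Z p = lieBracket ℝ X Z p - lieBracket ℝ Y Z p := by
    simp only [lieBracket, Pi.sub_apply, map_sub,
      fderiv_sub ((hX.differentiable (by simp)) p) ((hY.differentiable (by simp)) p),
      sub_apply]
    abel
  simp only [Pi.sub_apply] at hZ' ⊢
  linear_combination (norm := module) hXY + hZ' + hbr - hX' + hY'

theorem nabla_lieBracket_left (hL : IsLeviCivita g nabla) (hX : ContDiff ℝ ∞ X)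
    (hY : ContDiff ℝ ∞ Y) (hZ : ContDiff ℝ ∞ Z) :
    nabla (lieBracket ℝ X Y) Z = nabla (nabla X Y) Z - nabla (nabla Y X) Z := by
  rw [hL.lieBracket_eq hX hY,
    hL.nabla_sub_left (hL.contDiff X Y hX hY) (hL.contDiff Y X hY hX) hZ]

theorem first_bianchi (hL : IsLeviCivita g nabla) (hX : ContDiff ℝ ∞ X)
    (hY : ContDiff ℝ ∞ Y) (hZ : ContDiff ℝ ∞ Z) :
    curvature nabla X Y Z + curvature nabla Y Z X + curvature nabla Z X Y = 0 := by
  funext p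
  have hbr : ∀ {U W : E → E}, ContDiff ℝ ∞ U → ContDiff ℝ ∞ W → ContDiff ℝ ∞ (lieBracket ℝ U W) :=
    fun hU hW => hU.lieBracket_vectorField hW (by simp)
  have tXY := hL.torsionFree _ Z (hbr hX hY) hZ p
  have tYZ := hL.torsionFree _ X (hbr hY hZ) hX p
  have tZX := hL.torsionFree _ Y (hbr hZ hX) hY p
  have nXY := congrFun (hL.nabla_lieBracket_right hX hY hZ) p
  have nYZ := congrFun (hL.nabla_lieBracket_right hY hZ hX) p
  have nZX := congrFun (hL.nabla_lieBracket_right hZ hX hY) p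
  have jac := jacobi_identity_lieBracket minSmoothness_two_le_infty (x := p)
    hX.contDiffAt hY.contDiffAt hZ.contDiffAt
  simp only [curvature, Pi.add_apply, Pi.sub_apply, Pi.zero_apply] at nXY nYZ nZX ⊢
  linear_combination (norm := module) tXY + tYZ + tZX + nXY + nYZ + nZX + jac

end IsLeviCivita

variable {Ω : E → E →L[ℝ] V}

theorem covDeriv_secondFundForm_apply
    (hns : ∀ X Y : E → E, ContDiff ℝ ∞ X → ContDiff ℝ ∞ Y → ContDiff ℝ ∞ (nabla X Y))
    (hΩ : ContDiff ℝ ∞ Ω) (hY : ContDiff ℝ ∞ Y) (hZ : ContDiff ℝ ∞ Z) (p : E) :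
    covDeriv nabla (secondFundForm Ω nabla) X Y Z p =
      fderiv ℝ (fun q => fderiv ℝ (fun q => Ω q (Z q)) q (Y q)) p (X p)
        - fderiv ℝ (fun q => Ω q (Z q)) p (nabla X Y p)
        - Ω p (nabla X (nabla Y Z) p) + Ω p (nabla (nabla X Y) Z p)
        - secondFundForm Ω nabla X (nabla Y Z) p - secondFundForm Ω nabla Y (nabla X Z) p := by
  have hF : ContDiff ℝ ∞ (fun q => Ω q (Z q)) := hΩ.clm_apply hZ
  have hDF : DifferentiableAt ℝ (fun q => fderiv ℝ (fun q => Ω q (Z q)) q (Y q)) p :=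
    ((hF.fderiv_right (by simp)).clm_apply hY).differentiable (by simp) p
  have hΩYZ : DifferentiableAt ℝ (fun q => Ω q (nabla Y Z q)) p :=
    (hΩ.clm_apply (hns Y Z hY hZ)).differentiable (by simp) p
  rw [covDeriv, show secondFundForm Ω nabla Y Z
      = (fun q => fderiv ℝ (fun q => Ω q (Z q)) q (Y q)) - (fun q => Ω q (nabla Y Z q)) from rfl,
    fderiv_sub hDF hΩYZ, sub_apply]
  simp only [secondFundForm]
  abel

theorem IsLeviCivita.gauss_codazzi (hL : IsLeviCivita g nabla)
    (hΩ : ContDiff ℝ ∞ Ω) (hX : ContDiff ℝ ∞ X) (hY : ContDiff ℝ ∞ Y) (hZ : ContDiff ℝ ∞ Z)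
    (p : E) :
    covDeriv nabla (secondFundForm Ω nabla) X Y Z p
      - covDeriv nabla (secondFundForm Ω nabla) Y X Z p = Ω p (curvature nabla X Y Z p) := by
  have hF : ContDiff ℝ ∞ (fun q => Ω q (Z q)) := hΩ.clm_apply hZ
  have flat := fderiv_apply_lieBracket hF.contDiffAt minSmoothness_two_le_infty
    (hY.differentiable (by simp) p) (hX.differentiable (by simp) p)
  have torsion := congrArg (fderiv ℝ (fun q => Ω q (Z q)) p) (hL.torsionFree X Y hX hY p)
  rw [covDeriv_secondFundForm_apply hL.contDiff hΩ hY hZ,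
    covDeriv_secondFundForm_apply hL.contDiff hΩ hX hZ, curvature,
    congrFun (hL.nabla_lieBracket_left hX hY hZ) p]
  simp only [Pi.sub_apply, map_add, map_sub] at torsion ⊢
  linear_combination (norm := module) -torsion - flat

theorem covDeriv_swap {β : (E → E) → (E → E) → E → V}
    (hns : ∀ X Y : E → E, ContDiff ℝ ∞ X → ContDiff ℝ ∞ Y → ContDiff ℝ ∞ (nabla X Y))
    (hβ : ∀ Y Z : E → E, ContDiff ℝ ∞ Y → ContDiff ℝ ∞ Z → ∀ p, β Y Z p = -β Z Y p)
    (hX : ContDiff ℝ ∞ X) (hY : ContDiff ℝ ∞ Y) (hZ : ContDiff ℝ ∞ Z) (p : E) :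
    covDeriv nabla β X Z Y p = -covDeriv nabla β X Y Z p := by
  simp only [covDeriv]
  rw [show β Z Y = -β Y Z from funext (hβ Z Y hZ hY), fderiv_neg, neg_apply,
    hβ _ Y (hns X Z hX hZ) hY, hβ Z _ hZ (hns X Y hX hY)]
  abel

theorem contDiff_pullback_metric [FiniteDimensional ℝ V] {B : V →ₗ[ℝ] V →ₗ[ℝ] ℝ}
    (ha : ∀ p (v w : E), B (Ω p v) (Ω p w) = g p v w) (hΩ : ContDiff ℝ ∞ Ω)
    (hY : ContDiff ℝ ∞ Y) (hZ : ContDiff ℝ ∞ Z) :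
    ContDiff ℝ ∞ (fun q => g q (Y q) (Z q)) := by
  simp_rw [← ha]
  exact (B.toContinuousBilinearMap.contDiff.comp (hΩ.clm_apply hY)).clm_apply (hΩ.clm_apply hZ)

end

theorem stmt_16_general {E V : Type*}
    [NormedAddCommGroup E] [NormedSpace ℝ E]
    [NormedAddCommGroup V] [NormedSpace ℝ V] [FiniteDimensional ℝ V]
    -- the nondegenerate symmetric bilinear form on V
    (B : V →ₗ[ℝ] V →ₗ[ℝ] ℝ)
    -- the Riemannian metric g
    (g : E → E →ₗ[ℝ] E →ₗ[ℝ] ℝ)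
    (hgpos : ∀ p (v : E), v ≠ 0 → 0 < g p v v)
    -- the V-valued one-form Ω, satisfying condition (a)
    (Ω : E → (E →L[ℝ] V)) (hΩ : ContDiff ℝ (⊤ : ℕ∞) Ω)
    (ha : ∀ p (v w : E), B (Ω p v) (Ω p w) = g p v w)
    -- the Levi-Civita connection ∇ of g: torsion-free and metric
    (nabla : (E → E) → (E → E) → (E → E))
    (hns : ∀ X Y : E → E, ContDiff ℝ (⊤ : ℕ∞) X → ContDiff ℝ (⊤ : ℕ∞) Y →
      ContDiff ℝ (⊤ : ℕ∞) (nabla X Y))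
    (htf : ∀ X Y : E → E, ContDiff ℝ (⊤ : ℕ∞) X → ContDiff ℝ (⊤ : ℕ∞) Y →
      ∀ p, nabla X Y p - nabla Y X p = fderiv ℝ Y p (X p) - fderiv ℝ X p (Y p))
    (hmetric : ∀ X Y Z : E → E, ContDiff ℝ (⊤ : ℕ∞) X → ContDiff ℝ (⊤ : ℕ∞) Y →
      ContDiff ℝ (⊤ : ℕ∞) Z → ∀ p,
      fderiv ℝ (fun q => g q (Y q) (Z q)) p (X p)
        = g p (nabla X Y p) (Z p) + g p (Y p) (nabla X Z p))
    -- the second fundamental form II(X,Y) = D_X(Ω(Y)) − Ω(∇_X Y)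
    (II : (E → E) → (E → E) → E → V)
    (hII : ∀ (X Y : E → E) p,
      II X Y p = fderiv ℝ (fun q => Ω q (Y q)) p (X p) - Ω p (nabla X Y p))
    -- II is skew-symmetric
    (hskew : ∀ X Y : E → E, ContDiff ℝ (⊤ : ℕ∞) X → ContDiff ℝ (⊤ : ℕ∞) Y →
      ∀ p, II X Y p = - II Y X p)
    -- the curvature tensor R(X,Y)Z = ∇_Y ∇_X Z − ∇_X ∇_Y Z + ∇_{[X,Y]} Z
    (Rt : (E → E) → (E → E) → (E → E) → E → E)
    (hRt : ∀ (X Y Z : E → E) p,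
      Rt X Y Z p = nabla Y (nabla X Z) p - nabla X (nabla Y Z) p
        + nabla (fun q => fderiv ℝ Y q (X q) - fderiv ℝ X q (Y q)) Z p) :
    -- (D_X II)(Y,Z) = D_X(II(Y,Z)) − II(∇_X Y, Z) − II(Y, ∇_X Z) = −Ω(R(Y,Z)X)
    -- (in particular the left-hand side is tangential)
    ∀ X Y Z : E → E, ContDiff ℝ (⊤ : ℕ∞) X → ContDiff ℝ (⊤ : ℕ∞) Y →
      ContDiff ℝ (⊤ : ℕ∞) Z → ∀ p,
      fderiv ℝ (fun q => II Y Z q) p (X p) - II (nabla X Y) Z p - II Y (nabla X Z) p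
        = - Ω p (Rt Y Z X p) := by
  intro X Y Z hX hY hZ p
  obtain rfl : II = secondFundForm Ω nabla := funext fun X => funext fun Y => funext (hII X Y)
  obtain rfl : Rt = curvature nabla :=
    funext fun X => funext fun Y => funext fun Z => funext (hRt X Y Z)
  have hL : IsLeviCivita g nabla :=
    { nondegenerate := fun p v h => by_contra fun hv => (hgpos p v hv).ne' (h v)
      contDiff_metric := fun _ _ hY hZ => contDiff_pullback_metric ha hΩ hY hZ
      contDiff := hns
      torsionFree := htf
      metric := hmetric }
  have : IsAddTorsionFree V := .of_isTorsionFree ℝ V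
  exact eq_neg_of_sub_swap_eq_of_skew (P := ContDiff ℝ ∞)
    (A := fun X Y Z => covDeriv nabla (secondFundForm Ω nabla) X Y Z p)
    (C := fun X Y Z => Ω p (curvature nabla X Y Z p))
    (fun _ _ _ hX hY hZ => hL.gauss_codazzi hΩ hX hY hZ p)
    (fun _ _ _ hX hY hZ => covDeriv_swap hns hskew hX hY hZ p)
    (fun _ _ _ hX hY hZ => by
      rw [← map_add, ← map_add, ← Pi.add_apply, ← Pi.add_apply,
        hL.first_bianchi hX hY hZ, Pi.zero_apply, map_zero])
    hX hY hZ

/-- (In the chart model where the manifold is a finite-dimensional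
real vector space `E` and the flat connection `D` is `fderiv`.) For a virtual
immersion `Ω` with skew-symmetric second fundamental form `II`, the covariant
derivative of `II` is tangential and
`(D_X II)(Y,Z) = −R(Y,Z)X`, with `R(X,Y)Z = ∇_Y∇_X Z − ∇_X∇_Y Z + ∇_{[X,Y]}Z`. -/
theorem stmt_16 {E V : Type*}
    [NormedAddCommGroup E] [NormedSpace ℝ E] [FiniteDimensional ℝ E]
    [NormedAddCommGroup V] [NormedSpace ℝ V] [FiniteDimensional ℝ V]
    -- the nondegenerate symmetric bilinear form on V
    (B : V →ₗ[ℝ] V →ₗ[ℝ] ℝ) (hBsymm : ∀ u v : V, B u v = B v u)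
    (hBnd : ∀ u : V, (∀ v : V, B u v = 0) → u = 0)
    -- the Riemannian metric g
    (g : E → E →ₗ[ℝ] E →ₗ[ℝ] ℝ) (hgsymm : ∀ p (v w : E), g p v w = g p w v)
    (hgpos : ∀ p (v : E), v ≠ 0 → 0 < g p v v)
    -- the V-valued one-form Ω, satisfying condition (a)
    (Ω : E → (E →L[ℝ] V)) (hΩ : ContDiff ℝ (⊤ : ℕ∞) Ω)
    (ha : ∀ p (v w : E), B (Ω p v) (Ω p w) = g p v w)
    -- condition (b): ⟨dΩ(X,Y), Ω(Z)⟩ = 0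
    (hb : ∀ X Y : E → E, ContDiff ℝ (⊤ : ℕ∞) X → ContDiff ℝ (⊤ : ℕ∞) Y → ∀ p (z : E),
        B (fderiv ℝ (fun q => Ω q (Y q)) p (X p)
            - fderiv ℝ (fun q => Ω q (X q)) p (Y p)
            - Ω p (fderiv ℝ Y p (X p) - fderiv ℝ X p (Y p))) (Ω p z) = 0)
    -- the Levi-Civita connection ∇ of g: torsion-free and metric
    (nabla : (E → E) → (E → E) → (E → E))
    (hns : ∀ X Y : E → E, ContDiff ℝ (⊤ : ℕ∞) X → ContDiff ℝ (⊤ : ℕ∞) Y →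
      ContDiff ℝ (⊤ : ℕ∞) (nabla X Y))
    (htf : ∀ X Y : E → E, ContDiff ℝ (⊤ : ℕ∞) X → ContDiff ℝ (⊤ : ℕ∞) Y →
      ∀ p, nabla X Y p - nabla Y X p = fderiv ℝ Y p (X p) - fderiv ℝ X p (Y p))
    (hmetric : ∀ X Y Z : E → E, ContDiff ℝ (⊤ : ℕ∞) X → ContDiff ℝ (⊤ : ℕ∞) Y →
      ContDiff ℝ (⊤ : ℕ∞) Z → ∀ p,
      fderiv ℝ (fun q => g q (Y q) (Z q)) p (X p)
        = g p (nabla X Y p) (Z p) + g p (Y p) (nabla X Z p))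
    -- the second fundamental form II(X,Y) = D_X(Ω(Y)) − Ω(∇_X Y)
    (II : (E → E) → (E → E) → E → V)
    (hII : ∀ (X Y : E → E) p,
      II X Y p = fderiv ℝ (fun q => Ω q (Y q)) p (X p) - Ω p (nabla X Y p))
    -- II is skew-symmetric
    (hskew : ∀ X Y : E → E, ContDiff ℝ (⊤ : ℕ∞) X → ContDiff ℝ (⊤ : ℕ∞) Y →
      ∀ p, II X Y p = - II Y X p)
    -- the curvature tensor R(X,Y)Z = ∇_Y ∇_X Z − ∇_X ∇_Y Z + ∇_{[X,Y]} Z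
    (Rt : (E → E) → (E → E) → (E → E) → E → E)
    (hRt : ∀ (X Y Z : E → E) p,
      Rt X Y Z p = nabla Y (nabla X Z) p - nabla X (nabla Y Z) p
        + nabla (fun q => fderiv ℝ Y q (X q) - fderiv ℝ X q (Y q)) Z p) :
    -- (D_X II)(Y,Z) = D_X(II(Y,Z)) − II(∇_X Y, Z) − II(Y, ∇_X Z) = −Ω(R(Y,Z)X)
    -- (in particular the left-hand side is tangential)
    ∀ X Y Z : E → E, ContDiff ℝ (⊤ : ℕ∞) X → ContDiff ℝ (⊤ : ℕ∞) Y →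
      ContDiff ℝ (⊤ : ℕ∞) Z → ∀ p,
      fderiv ℝ (fun q => II Y Z q) p (X p) - II (nabla X Y) Z p - II Y (nabla X Z) p
        = - Ω p (Rt Y Z X p) :=
  stmt_16_general B g hgpos Ω hΩ ha nabla hns htf hmetric II hII hskew Rt hRt
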